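/- arXiv:1610.03025 — 2 statements merged into one kernel-verified Lean document; each statement's English description precedes it below -/
import Mathlib

section
/- Suppose (U^n) and (V^n) both solve the implicit upwind scheme (with the same f⁺, f⁻, δ). Fix n ∈ ℕ and assume that for each 0 ≤ k ≤ n+1 the sequence j ↦ |U^k_j − V^k_j| is summable over ℤ, and that the sequences j ↦ |f⁺(U^{n+1}_j) − f⁺(V^{n+1}_j)| and j ↦ |f⁻(U^{n+1}_j) − f⁻(V^{n+1}_j)| are summable over ℤ. Then, with no restriction on δ, Σ_{j∈ℤ} |U^{n+1}_j − V^{n+1}_j| ≤ Σ_{k=0}^{n} c^{n+1}_k Σ_{j∈ℤ} |U^k_j − V^k_j|. -/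
/-!
Subtract the schemes for `U` and `V` at time `n + 1`. Because `f⁺` is nondecreasing and `f⁻`
nonincreasing, `U_j - V_j`, `δ (f⁺(U_j) - f⁺(V_j))` and `-δ (f⁻(U_j) - f⁻(V_j))` all have the same
sign, so the absolute value of their sum is the sum of their absolute values. The remaining flux
terms sit at `j - 1` and `j + 1`; after bounding them by their absolute values and summing over
`j ∈ ℤ`, they cancel the fluxes at `j` by shift invariance, for every `δ ≥ 0`. What is left is the
history term, whose weights `c^{n+1}_k` are nonnegative by concavity of `x ↦ x ^ (1 - α)`.
-/

open scoped BigOperators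

/-- The L1 coefficients `c^{n+1}_k` for the discrete Caputo derivative:
`c^{n+1}_0 = (n+1)^{1-α} - n^{1-α}` and, for `1 ≤ k ≤ n`,
`c^{n+1}_k = 2(n+1-k)^{1-α} - (n+2-k)^{1-α} - (n-k)^{1-α}`. -/
noncomputable def caputoCoeff (α : ℝ) (n k : ℕ) : ℝ :=
  if k = 0 then ((n : ℝ) + 1) ^ (1 - α) - (n : ℝ) ^ (1 - α)
  else 2 * ((n : ℝ) + 1 - (k : ℝ)) ^ (1 - α) - ((n : ℝ) + 2 - (k : ℝ)) ^ (1 - α)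
    - ((n : ℝ) - (k : ℝ)) ^ (1 - α)

/-- `U` solves the implicit upwind scheme with time steps indexed by `ℕ`
and space indexed by `ℤ`. -/
def SolvesImplicitScheme (α δ : ℝ) (fp fm : ℝ → ℝ) (U : ℕ → ℤ → ℝ) : Prop :=
  ∀ (n : ℕ) (j : ℤ),
    U (n + 1) j = (∑ k ∈ Finset.range (n + 1), caputoCoeff α n k * U k j)
      - δ * (fp (U (n + 1) j) - fp (U (n + 1) (j - 1)))
      - δ * (fm (U (n + 1) (j + 1)) - fm (U (n + 1) j))

open Finset

lemma caputoCoeff_nonneg {α : ℝ} (hα : α ∈ Set.Ioo (0 : ℝ) 1) {n k : ℕ} (hk : k ≤ n) :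
    0 ≤ caputoCoeff α n k := by
  obtain ⟨hα0, hα1⟩ := hα
  have hp : (0 : ℝ) ≤ 1 - α := by linarith
  rw [caputoCoeff]
  split_ifs
  · linarith [Real.rpow_le_rpow (Nat.cast_nonneg n) (le_add_of_nonneg_right zero_le_one) hp]
  · -- midpoint concavity of `x ↦ x ^ (1 - α)` at `n - k`, `n + 2 - k`
    have hkn : (k : ℝ) ≤ n := by exact_mod_cast hk
    have hmid := (Real.concaveOn_rpow hp (by linarith)).2
      (show (n : ℝ) - k ∈ Set.Ici 0 by simp [hkn]) (show (n : ℝ) + 2 - k ∈ Set.Ici 0 by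
        simp only [Set.mem_Ici]; linarith)
      (by norm_num : (0 : ℝ) ≤ 1 / 2) (by norm_num : (0 : ℝ) ≤ 1 / 2) (by norm_num)
    simp only [smul_eq_mul] at hmid
    rw [show (1 / 2 : ℝ) * (n - k) + 1 / 2 * (n + 2 - k) = n + 1 - k by ring] at hmid
    linarith

lemma abs_sum_caputoCoeff_mul_le {α : ℝ} (hα : α ∈ Set.Ioo (0 : ℝ) 1) (n : ℕ) (x : ℕ → ℝ) :
    |∑ k ∈ range (n + 1), caputoCoeff α n k * x k|
      ≤ ∑ k ∈ range (n + 1), caputoCoeff α n k * |x k| := by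
  refine (abs_sum_le_sum_abs _ _).trans (sum_le_sum fun k hk => ?_)
  rw [abs_mul, abs_of_nonneg (caputoCoeff_nonneg hα (Nat.lt_succ_iff.mp (mem_range.mp hk)))]

lemma abs_sub_add_abs_sub_add_abs_sub {f g : ℝ → ℝ} (hf : Monotone f) (hg : Antitone g)
    {δ : ℝ} (hδ : 0 ≤ δ) (x y : ℝ) :
    |x - y| + δ * |f x - f y| + δ * |g x - g y|
      = |x - y + δ * (f x - f y) - δ * (g x - g y)| := by
  rcases le_total y x with hxy | hxy
  · have hF : 0 ≤ δ * (f x - f y) := mul_nonneg hδ (sub_nonneg.mpr (hf hxy))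
    have hG : δ * (g x - g y) ≤ 0 := mul_nonpos_of_nonneg_of_nonpos hδ (sub_nonpos.mpr (hg hxy))
    rw [abs_of_nonneg (sub_nonneg.mpr hxy), abs_of_nonneg (sub_nonneg.mpr (hf hxy)),
      abs_of_nonpos (sub_nonpos.mpr (hg hxy)), abs_of_nonneg (by linarith)]
    ring
  · have hF : δ * (f x - f y) ≤ 0 := mul_nonpos_of_nonneg_of_nonpos hδ (sub_nonpos.mpr (hf hxy))
    have hG : 0 ≤ δ * (g x - g y) := mul_nonneg hδ (sub_nonneg.mpr (hg hxy))
    rw [abs_of_nonpos (sub_nonpos.mpr hxy), abs_of_nonpos (sub_nonpos.mpr (hf hxy)),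
      abs_of_nonneg (sub_nonneg.mpr (hg hxy)), abs_of_nonpos (by linarith)]
    ring

/-- On `ℤ`, summable flux terms `a (j - 1) - a j` and `b (j + 1) - b j` telescope away. -/
lemma tsum_le_tsum_of_le_add_shift {w r a b : ℤ → ℝ} (hw : Summable w) (hr : Summable r)
    (ha : Summable a) (hb : Summable b) (h : ∀ j, w j + a j + b j ≤ r j + a (j - 1) + b (j + 1)) :
    ∑' j, w j ≤ ∑' j, r j := by
  have ha' : HasSum (fun j => a (j - 1)) (∑' j, a j) :=
    (Equiv.subRight (1 : ℤ)).hasSum_iff.mpr ha.hasSum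
  have hb' : HasSum (fun j => b (j + 1)) (∑' j, b j) :=
    (Equiv.addRight (1 : ℤ)).hasSum_iff.mpr hb.hasSum
  linarith [hasSum_le h ((hw.hasSum.add ha.hasSum).add hb.hasSum)
    ((hr.hasSum.add ha').add hb')]

namespace SolvesImplicitScheme

variable {α δ : ℝ} {fp fm : ℝ → ℝ} {U V : ℕ → ℤ → ℝ}

lemma sub_eq (hU : SolvesImplicitScheme α δ fp fm U) (hV : SolvesImplicitScheme α δ fp fm V)
    (n : ℕ) (j : ℤ) :
    U (n + 1) j - V (n + 1) j + δ * (fp (U (n + 1) j) - fp (V (n + 1) j))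
        - δ * (fm (U (n + 1) j) - fm (V (n + 1) j))
      = ∑ k ∈ range (n + 1), caputoCoeff α n k * (U k j - V k j)
        + δ * (fp (U (n + 1) (j - 1)) - fp (V (n + 1) (j - 1)))
        - δ * (fm (U (n + 1) (j + 1)) - fm (V (n + 1) (j + 1))) := by
  simp only [mul_sub, sum_sub_distrib]
  linear_combination hU n j - hV n j

lemma abs_sub_add_le (hU : SolvesImplicitScheme α δ fp fm U)
    (hV : SolvesImplicitScheme α δ fp fm V) (hα : α ∈ Set.Ioo (0 : ℝ) 1) (hδ : 0 ≤ δ)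
    (hfp : Monotone fp) (hfm : Antitone fm) (n : ℕ) (j : ℤ) :
    |U (n + 1) j - V (n + 1) j| + δ * |fp (U (n + 1) j) - fp (V (n + 1) j)|
        + δ * |fm (U (n + 1) j) - fm (V (n + 1) j)|
      ≤ ∑ k ∈ range (n + 1), caputoCoeff α n k * |U k j - V k j|
        + δ * |fp (U (n + 1) (j - 1)) - fp (V (n + 1) (j - 1))|
        + δ * |fm (U (n + 1) (j + 1)) - fm (V (n + 1) (j + 1))| := by
  rw [abs_sub_add_abs_sub_add_abs_sub hfp hfm hδ, hU.sub_eq hV]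
  refine (abs_sub _ _).trans ((add_le_add_left (abs_add_le _ _) _).trans ?_)
  rw [abs_mul, abs_mul, abs_of_nonneg hδ]
  gcongr
  exact abs_sum_caputoCoeff_mul_le hα n _

end SolvesImplicitScheme

/-- one-step `ℓ¹` estimate for the implicit upwind scheme, with no
restriction on `δ`:
`Σ_j |U^{n+1}_j - V^{n+1}_j| ≤ Σ_{k=0}^n c^{n+1}_k Σ_j |U^k_j - V^k_j|`. -/
theorem implicit_upwind_l1_step (α τ h : ℝ) (hα : α ∈ Set.Ioo (0 : ℝ) 1)
    (hτ : 0 < τ) (hh : 0 < h) (δ : ℝ) (hδ : δ = τ ^ α / (h * Real.Gamma (2 - α)))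
    (fp fm : ℝ → ℝ) (hfp : Differentiable ℝ fp) (hfm : Differentiable ℝ fm)
    (hfp' : ∀ x, 0 ≤ deriv fp x) (hfm' : ∀ x, deriv fm x ≤ 0)
    (U V : ℕ → ℤ → ℝ)
    (hU : SolvesImplicitScheme α δ fp fm U) (hV : SolvesImplicitScheme α δ fp fm V)
    (n : ℕ) (hsum : ∀ k ≤ n + 1, Summable (fun j : ℤ => |U k j - V k j|))
    (hfpsum : Summable (fun j : ℤ => |fp (U (n + 1) j) - fp (V (n + 1) j)|))
    (hfmsum : Summable (fun j : ℤ => |fm (U (n + 1) j) - fm (V (n + 1) j)|)) :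
    ∑' j : ℤ, |U (n + 1) j - V (n + 1) j|
      ≤ ∑ k ∈ Finset.range (n + 1), caputoCoeff α n k * ∑' j : ℤ, |U k j - V k j| := by
  have hδ0 : 0 ≤ δ := hδ ▸ div_nonneg (Real.rpow_nonneg hτ.le α)
    (mul_pos hh (Real.Gamma_pos_of_pos (by linarith [hα.2]))).le
  have hsum' : ∀ k ∈ range (n + 1),
      Summable (fun j : ℤ => caputoCoeff α n k * |U k j - V k j|) := fun k hk =>
    (hsum k (by have := mem_range.mp hk; omega)).mul_left _
  calc ∑' j : ℤ, |U (n + 1) j - V (n + 1) j|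
      ≤ ∑' j : ℤ, ∑ k ∈ range (n + 1), caputoCoeff α n k * |U k j - V k j| :=
        tsum_le_tsum_of_le_add_shift (hsum _ le_rfl) (summable_sum hsum')
          (hfpsum.mul_left δ) (hfmsum.mul_left δ)
          (hU.abs_sub_add_le hV hα hδ0 (monotone_of_deriv_nonneg hfp hfp')
            (antitone_of_deriv_nonpos hfm hfm') n)
    _ = ∑ k ∈ range (n + 1), caputoCoeff α n k * ∑' j : ℤ, |U k j - V k j| := by
        rw [Summable.tsum_finsetSum hsum']
        exact sum_congr rfl fun k _ => tsum_mul_left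
end

section
/- Suppose (U^n) solves the implicit upwind scheme for linear advection with λ > 0, and fix n ∈ ℕ. Assume that for each 0 ≤ k ≤ n+1 the sequence j ↦ (U^k_j)² is summable over ℤ. Then the energy identity holds: Σ_{j∈ℤ} (U^{n+1}_j)² + Σ_{k=0}^{n} c^{n+1}_k Σ_{j∈ℤ} (U^{n+1}_j − U^k_j)² + λ Σ_{j∈ℤ} (U^{n+1}_j − U^{n+1}_{j−1})² = Σ_{k=0}^{n} c^{n+1}_k Σ_{j∈ℤ} (U^k_j)². -/
open scoped BigOperators

/-- `U` solves the implicit upwind scheme for the linear advection equation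
with flux `f(u) = a u`, `a > 0`, where `lam = a τ^α / (h Γ(2-α))`. -/
def SolvesImplicitAdvection (α lam : ℝ) (U : ℕ → ℤ → ℝ) : Prop :=
  ∀ (n : ℕ) (j : ℤ),
    U (n + 1) j = (∑ k ∈ Finset.range (n + 1), caputoCoeff α n k * U k j)
      - lam * (U (n + 1) j - U (n + 1) (j - 1))

/-!
The coefficients `c^{n+1}_k` telescope to `1`, so the scheme writes `U^{n+1}_j` as a combination of
the `U^k_j` with weights summing to `1`, corrected by `λ (U^{n+1}_j - U^{n+1}_{j-1})`. Multiplying by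
`2 U^{n+1}_j` and using `2 v (v - u) = v² + (v - u)² - u²` gives, at each `j`, the identity with the
extra term `λ ((U^{n+1}_{j-1})² - (U^{n+1}_j)²)`; this term sums to zero over `ℤ` because the
shift `j ↦ j - 1` does not change `Σ_j (U^{n+1}_j)²`.
-/

open Finset

theorem caputoCoeff_succ (α : ℝ) (n k : ℕ) :
    caputoCoeff α n (k + 1) =
      (((n : ℝ) + 1 - (k + 1 : ℕ)) ^ (1 - α) - ((n : ℝ) - (k + 1 : ℕ)) ^ (1 - α))
        - (((n : ℝ) + 1 - k) ^ (1 - α) - ((n : ℝ) - k) ^ (1 - α)) := by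
  simp only [caputoCoeff, Nat.succ_ne_zero, if_false]
  rw [show (n : ℝ) + 2 - (k + 1 : ℕ) = n + 1 - k by push_cast; ring,
    show (n : ℝ) + 1 - (k + 1 : ℕ) = n - k by push_cast; ring]
  ring

theorem sum_caputoCoeff {α : ℝ} (hα : α ≠ 1) (n : ℕ) :
    ∑ k ∈ range (n + 1), caputoCoeff α n k = 1 := by
  rw [sum_range_succ', sum_congr rfl fun k _ => caputoCoeff_succ α n k,
    sum_range_sub (fun m : ℕ => ((n : ℝ) + 1 - m) ^ (1 - α) - ((n : ℝ) - m) ^ (1 - α))]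
  simp [caputoCoeff, Real.zero_rpow (sub_ne_zero.mpr hα.symm)]

theorem Summable.sq_sub {ι : Type*} {f g : ι → ℝ} (hf : Summable fun i => f i ^ 2)
    (hg : Summable fun i => g i ^ 2) : Summable fun i => (f i - g i) ^ 2 :=
  ((hf.add hg).mul_left 2).of_nonneg_of_le (fun _ => sq_nonneg _)
    fun i => by nlinarith [sq_nonneg (f i + g i)]

theorem sq_add_sum_mul_sq_sub_add_eq {ι : Type*} (s : Finset ι) {c u : ι → ℝ}
    (hc : ∑ i ∈ s, c i = 1) {lam v w : ℝ} (hv : v = ∑ i ∈ s, c i * u i - lam * (v - w)) :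
    v ^ 2 + ∑ i ∈ s, c i * (v - u i) ^ 2 + lam * (v - w) ^ 2
      = ∑ i ∈ s, c i * u i ^ 2 + lam * (w ^ 2 - v ^ 2) := by
  have hexpand : ∑ i ∈ s, c i * (v - u i) ^ 2
      = (∑ i ∈ s, c i) * v ^ 2 - 2 * v * ∑ i ∈ s, c i * u i + ∑ i ∈ s, c i * u i ^ 2 := by
    rw [sum_mul, mul_sum, ← sum_sub_distrib, ← sum_add_distrib]
    exact sum_congr rfl fun i _ => by ring
  rw [hexpand, hc]
  linear_combination (2 * v) * hv

theorem tsum_sq_add_sum_mul_tsum_sq_sub_add_eq {ι : Type*} (s : Finset ι) {c : ι → ℝ}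
    (hc : ∑ i ∈ s, c i = 1) (lam : ℝ) {u : ι → ℤ → ℝ} {v : ℤ → ℝ}
    (hv : ∀ j, v j = ∑ i ∈ s, c i * u i j - lam * (v j - v (j - 1)))
    (hu : ∀ i ∈ s, Summable fun j => u i j ^ 2) (hv2 : Summable fun j => v j ^ 2) :
    ∑' j, v j ^ 2 + ∑ i ∈ s, c i * ∑' j, (v j - u i j) ^ 2
        + lam * ∑' j, (v j - v (j - 1)) ^ 2
      = ∑ i ∈ s, c i * ∑' j, u i j ^ 2 := by
  have hshift : HasSum (fun j => v (j - 1) ^ 2) (∑' j, v j ^ 2) :=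
    (Equiv.subRight (1 : ℤ)).hasSum_iff.mpr hv2.hasSum
  have hlhs := (hv2.hasSum.add (hasSum_sum fun i hi =>
      ((hv2.sq_sub (hu i hi)).hasSum.mul_left (c i)))).add
    ((hv2.sq_sub hshift.summable).hasSum.mul_left lam)
  have hrhs := (hasSum_sum fun i hi => ((hu i hi).hasSum.mul_left (c i))).add
    ((hshift.sub hv2.hasSum).mul_left lam)
  rw [sub_self, mul_zero, add_zero] at hrhs
  exact hlhs.unique (by simpa only [sq_add_sum_mul_sq_sub_add_eq s hc (hv _)] using hrhs)

theorem implicit_advection_energy_identity_general (α : ℝ)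
    (hα : α ∈ Set.Ioo (0 : ℝ) 1) (lam : ℝ)
    (U : ℕ → ℤ → ℝ) (hU : SolvesImplicitAdvection α lam U)
    (n : ℕ) (hsum : ∀ k ≤ n + 1, Summable (fun j : ℤ => (U k j) ^ 2)) :
    (∑' j : ℤ, (U (n + 1) j) ^ 2)
      + (∑ k ∈ Finset.range (n + 1), caputoCoeff α n k
          * ∑' j : ℤ, (U (n + 1) j - U k j) ^ 2)
      + lam * ∑' j : ℤ, (U (n + 1) j - U (n + 1) (j - 1)) ^ 2
    = ∑ k ∈ Finset.range (n + 1), caputoCoeff α n k * ∑' j : ℤ, (U k j) ^ 2 :=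
  tsum_sq_add_sum_mul_tsum_sq_sub_add_eq (range (n + 1)) (sum_caputoCoeff hα.2.ne n) lam
    (hU n) (fun k hk => hsum k (mem_range.mp hk).le) (hsum (n + 1) le_rfl)

/-- energy identity for the implicit upwind scheme for linear advection:
`Σ_j (U^{n+1}_j)² + Σ_k c^{n+1}_k Σ_j (U^{n+1}_j - U^k_j)²
  + λ Σ_j (U^{n+1}_j - U^{n+1}_{j-1})² = Σ_k c^{n+1}_k Σ_j (U^k_j)²`. -/
theorem implicit_advection_energy_identity (α τ h a : ℝ)
    (hα : α ∈ Set.Ioo (0 : ℝ) 1) (hτ : 0 < τ) (hh : 0 < h) (ha : 0 < a)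
    (lam : ℝ) (hlam : lam = a * τ ^ α / (h * Real.Gamma (2 - α)))
    (U : ℕ → ℤ → ℝ) (hU : SolvesImplicitAdvection α lam U)
    (n : ℕ) (hsum : ∀ k ≤ n + 1, Summable (fun j : ℤ => (U k j) ^ 2)) :
    (∑' j : ℤ, (U (n + 1) j) ^ 2)
      + (∑ k ∈ Finset.range (n + 1), caputoCoeff α n k
          * ∑' j : ℤ, (U (n + 1) j - U k j) ^ 2)
      + lam * ∑' j : ℤ, (U (n + 1) j - U (n + 1) (j - 1)) ^ 2
    = ∑ k ∈ Finset.range (n + 1), caputoCoeff α n k * ∑' j : ℤ, (U k j) ^ 2 :=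
  implicit_advection_energy_identity_general α hα lam U hU n hsum
end
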